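/- arXiv:2009.00315 — 4 statements merged into one kernel-verified Lean document; each statement's English description precedes it below -/
import Mathlib

section
/- Tarski's Undefinability Theorem implies the Semantic Diagonal Lemma: if no formula defines the set of Gödel codes of true sentences in ℕ, then for every formula Ψ(x) there exists a sentence θ such that ℕ ⊨ Ψ(⌜θ⌝) ↔ θ. -/
open FirstOrder Language

/-- Function symbols of the language of arithmetic: 0, 1, +, ×. -/
inductive ArithFunc : ℕ → Type
  | zero : ArithFunc 0
  | one : ArithFunc 0
  | add : ArithFunc 2
  | mul : ArithFunc 2

/-- Relation symbols of the language of arithmetic: <. -/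
inductive ArithRel : ℕ → Type
  | lt : ArithRel 2

/-- The first-order language of arithmetic. -/
def LA : FirstOrder.Language := ⟨ArithFunc, ArithRel⟩

/-- The standard model ℕ of arithmetic. -/
instance : LA.Structure ℕ where
  funMap := fun {_} f => match f with
    | .zero => fun _ => 0
    | .one => fun _ => 1
    | .add => fun v => v 0 + v 1
    | .mul => fun v => v 0 * v 1
  RelMap := fun {_} r => match r with
    | .lt => fun v => v 0 < v 1

instance : Encodable (Σ n, LA.Functions n) :=
  Encodable.ofEquiv (Fin 4)
    { toFun := fun f => match f with
        | ⟨0, .zero⟩ => 0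
        | ⟨0, .one⟩ => 1
        | ⟨2, .add⟩ => 2
        | ⟨2, .mul⟩ => 3
      invFun := fun i => match i with
        | 0 => ⟨0, .zero⟩
        | 1 => ⟨0, .one⟩
        | 2 => ⟨2, .add⟩
        | 3 => ⟨2, .mul⟩
      left_inv := by rintro ⟨n, f⟩ <;> cases f <;> rfl
      right_inv := by intro i; fin_cases i <;> rfl }

instance : Encodable (Σ n, LA.Relations n) :=
  Encodable.ofEquiv (Fin 1)
    { toFun := fun f => match f with
        | ⟨2, .lt⟩ => 0
      invFun := fun _ => ⟨2, .lt⟩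
      left_inv := by rintro ⟨n, r⟩; cases r; rfl
      right_inv := by intro i; fin_cases i; rfl }

/-- A canonical (computable, injective) Gödel numbering `⌜·⌝` of sentences,
via Mathlib's list encoding of first-order formulas. -/
def godelCode (φ : LA.Sentence) : ℕ :=
  Encodable.encode φ.listEncode

/-- The numeral `n̄`: `0̄ = 0`, `1̄ = 1`, `(m+1)̄ = 1 + m̄`. -/
def numeral (α : Type) : ℕ → LA.Term α
  | 0 => Constants.term ArithFunc.zero
  | 1 => Constants.term ArithFunc.one
  | n + 2 => Functions.apply₂ (L := LA) ArithFunc.add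
      (Constants.term ArithFunc.one) (numeral α (n + 1))

/-- `ℕ ⊨ Ψ(⌜θ⌝)`: the formula `Ψ(x)` holds in the standard model ℕ at the
Gödel code of the sentence `θ`. -/
def RealizeAtCode (Ψ : LA.Formula (Fin 1)) (θ : LA.Sentence) : Prop :=
  Ψ.Realize (M := ℕ) (fun _ => (godelCode θ : ℕ))

/-- A theory is consistent iff it does not prove (have as a consequence) falsum. -/
def Consistent (T : LA.Theory) : Prop :=
  ¬ (T ⊨ᵇ (⊥ : LA.Sentence))

/-- The sentence `Ψ(⌜θ⌝) ↔ θ`. -/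
def diagBicond (Ψ : LA.Formula (Fin 1)) (θ : LA.Sentence) : LA.Sentence :=
  (Ψ.subst (fun _ => numeral Empty (godelCode θ))) ⇔ θ

/-- The term `t + 1` (successor). -/
def succT {α : Type} {n : ℕ} (t : LA.Term (α ⊕ Fin n)) : LA.Term (α ⊕ Fin n) :=
  Functions.apply₂ (L := LA) ArithFunc.add t (Constants.term ArithFunc.one)

/-- The term `0`. -/
def zeroT {α : Type} {n : ℕ} : LA.Term (α ⊕ Fin n) := Constants.term (L := LA) ArithFunc.zero

/-- The term `t + s`. -/
def addT {α : Type} {n : ℕ} (t s : LA.Term (α ⊕ Fin n)) : LA.Term (α ⊕ Fin n) :=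
  Functions.apply₂ (L := LA) ArithFunc.add t s

/-- The term `t * s`. -/
def mulT {α : Type} {n : ℕ} (t s : LA.Term (α ⊕ Fin n)) : LA.Term (α ⊕ Fin n) :=
  Functions.apply₂ (L := LA) ArithFunc.mul t s

/-- The atomic formula `t < s`. -/
def ltF {α : Type} {n : ℕ} (t s : LA.Term (α ⊕ Fin n)) : LA.BoundedFormula α n :=
  Relations.boundedFormula₂ (L := LA) ArithRel.lt t s

/-- Robinson's arithmetic Q. -/
def Q : LA.Theory :=
  { ∀' ∼(succT &0 =' zeroT),
    ∀' ∀' (succT &0 =' succT &1 ⟹ &0 =' &1),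
    ∀' (∼(&0 =' zeroT) ⟹ ∃' (&0 =' succT &1)),
    ∀' (addT &0 zeroT =' &0),
    ∀' ∀' (addT &0 (succT &1) =' succT (addT &0 &1)),
    ∀' (mulT &0 zeroT =' zeroT),
    ∀' ∀' (mulT &0 (succT &1) =' addT (mulT &0 &1) &0),
    ∀' ∀' (ltF &0 &1 ⇔ ∃' (addT &0 (succT &2) =' &1)) }

/-- A theory is recursively enumerable iff its set of Gödel codes is the domain
of a partial recursive function. -/
def RETheory (T : LA.Theory) : Prop :=
  ∃ f : ℕ →. Unit, Partrec f ∧ ∀ φ : LA.Sentence, φ ∈ T ↔ (f (godelCode φ)).Dom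

/-!
If `Ψ` had no diagonal sentence, then `ℕ ⊨ θ ↔ ℕ ⊭ Ψ(⌜θ⌝)` for every sentence `θ`, so
`Sent(x) ∧ ¬Ψ(x)` would define truth, where `Sent` defines the set of codes of sentences.
That set is definable: it is the range of a primitive recursive enumeration (decode a number
into a formula, then compute the code of the result), and by Gödel's β-function the graph of every
primitive recursive function is definable in `(ℕ, 0, 1, +, ×, <)`.
-/

open Set Encodable

namespace Set

variable {M : Type*} {L : Language} [L.Structure M] {A : Set M} {α : Type*}

theorem Definable.exists_var {p : (α → M) → M → Prop}
    (h : A.Definable L {w : Option α → M | p (fun a => w (some a)) (w none)}) :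
    A.Definable L {v | ∃ x, p v x} := by
  convert (h.preimage_comp fun o : Option α => o.elim (Sum.inr ()) Sum.inl).exists_of_finite
    using 1
  ext v
  exact ⟨fun ⟨x, hx⟩ => ⟨fun _ => x, hx⟩, fun ⟨u, hu⟩ => ⟨u (), hu⟩⟩

theorem Definable.forall_var {p : (α → M) → M → Prop}
    (h : A.Definable L {w : Option α → M | p (fun a => w (some a)) (w none)}) :
    A.Definable L {v | ∀ x, p v x} := by
  simpa [compl_ofPred] using (Definable.exists_var (p := fun v x => ¬p v x) h.compl).compl

theorem Definable.imp {p q : (α → M) → Prop} (hp : A.Definable L {v | p v})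
    (hq : A.Definable L {v | q v}) : A.Definable L {v | p v → q v} := by
  convert hp.himp hq using 1
  ext
  simp [imp_iff_not_or]

end Set

theorem Nat.right_lt_pair {t : ℕ} (a : ℕ) (ht : t ≠ 0) : a < Nat.pair t a := by
  have := Nat.unpair_add_le (Nat.pair t a)
  rw [Nat.unpair_pair] at this
  omega

theorem List.getD_map_range {β : Type*} (f : ℕ → β) (d : β) {i m : ℕ} (h : i < m) :
    ((List.range m).map f).getD i d = f i := by
  simp [h]

theorem Encodable.encode_list_map_encode {β : Type*} [Encodable β] (l : List β) :
    encode (l.map encode) = encode l := by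
  induction l with
  | nil => rfl
  | cons b l ih => simp [encode_list_cons, ih]

theorem Nat.rec_eq_iff_exists_beta (b : ℕ) (s : ℕ → ℕ → ℕ) (n y : ℕ) :
    Nat.rec (motive := fun _ => ℕ) b s n = y ↔ ∃ c, Nat.beta c 0 = b ∧
      (∀ x, x < n → Nat.beta c (x + 1) = s x (Nat.beta c x)) ∧ Nat.beta c n = y := by
  constructor
  · rintro rfl
    set l := List.ofFn fun i : Fin (n + 1) => Nat.rec (motive := fun _ => ℕ) b s i
    have hc (i : ℕ) (hi : i ≤ n) :
        Nat.beta (Nat.unbeta l) i = Nat.rec (motive := fun _ => ℕ) b s i := by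
      simpa only [l, Fin.getElem_fin, List.getElem_ofFn] using
        Nat.beta_unbeta_coe l ⟨i, by simp [l]; omega⟩
    exact ⟨_, hc 0 (Nat.zero_le n), fun x hx => by rw [hc x hx.le, hc (x + 1) hx], hc n le_rfl⟩
  · rintro ⟨c, h0, hs, rfl⟩
    have key (i : ℕ) (hi : i ≤ n) : Nat.rec (motive := fun _ => ℕ) b s i = Nat.beta c i := by
      induction i with
      | zero => exact h0.symm
      | succ i ih => rw [hs i hi, ← ih (by omega)]
    exact key n le_rfl

namespace LA

section Definability

variable {α : Type} {f g : (α → ℕ) → ℕ}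

theorem realize_numeral (v : α → ℕ) : ∀ n, (numeral α n).realize v = n
  | 0 => rfl
  | 1 => rfl
  | n + 2 => by
    change 1 + (numeral α (n + 1)).realize v = n + 2
    rw [realize_numeral v (n + 1)]
    ring

@[fun_prop]
theorem definableFun_const (n : ℕ) : (∅ : Set ℕ).DefinableFun LA fun _ : α → ℕ => n := by
  simpa [realize_numeral] using (numeral α n).definableFun_realize (M := ℕ)

theorem definableFun_comp₁ {F : ℕ → ℕ}
    (hF : (∅ : Set ℕ).DefinableFun LA fun v : Fin 1 → ℕ => F (v 0))
    (hf : (∅ : Set ℕ).DefinableFun LA f) : (∅ : Set ℕ).DefinableFun LA fun v => F (f v) :=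
  DefinableFun.comp (g := fun v _ => f v) (fun _ => hf) hF

theorem definableFun_comp₂ {F : ℕ → ℕ → ℕ}
    (hF : (∅ : Set ℕ).DefinableFun LA fun v : Fin 2 → ℕ => F (v 0) (v 1))
    (hf : (∅ : Set ℕ).DefinableFun LA f) (hg : (∅ : Set ℕ).DefinableFun LA g) :
    (∅ : Set ℕ).DefinableFun LA fun v => F (f v) (g v) :=
  DefinableFun.comp (g := fun v => ![f v, g v]) (by simp [DefinableMap, *]) hF

@[fun_prop]
theorem definableFun_add (hf : (∅ : Set ℕ).DefinableFun LA f)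
    (hg : (∅ : Set ℕ).DefinableFun LA g) : (∅ : Set ℕ).DefinableFun LA fun v => f v + g v :=
  definableFun_comp₂ (F := (· + ·)) (DefinableFun.fun_symbol (L := LA) ArithFunc.add) hf hg

@[fun_prop]
theorem definableFun_mul (hf : (∅ : Set ℕ).DefinableFun LA f)
    (hg : (∅ : Set ℕ).DefinableFun LA g) : (∅ : Set ℕ).DefinableFun LA fun v => f v * g v :=
  definableFun_comp₂ (F := (· * ·)) (DefinableFun.fun_symbol (L := LA) ArithFunc.mul) hf hg

theorem definable_lt (hf : (∅ : Set ℕ).DefinableFun LA f) (hg : (∅ : Set ℕ).DefinableFun LA g) :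
    (∅ : Set ℕ).Definable LA {v | f v < g v} := by
  have hlt : (∅ : Set ℕ).Definable LA {x : Fin 2 → ℕ | x 0 < x 1} :=
    (empty_definable_iff (M := ℕ)).2
      ⟨Relations.formula₂ ArithRel.lt (Term.var 0) (Term.var 1), by ext; rfl⟩
  exact hlt.preimage_map (F := fun v => ![f v, g v]) (by simp [DefinableMap, *])

@[fun_prop]
theorem definableFun_pair (hf : (∅ : Set ℕ).DefinableFun LA f)
    (hg : (∅ : Set ℕ).DefinableFun LA g) :
    (∅ : Set ℕ).DefinableFun LA fun v => Nat.pair (f v) (g v) := by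
  unfold Nat.pair
  exact DefinableFun.ite (definable_lt hf hg) (by fun_prop) (by fun_prop)

@[fun_prop]
theorem definableFun_unpair_fst (hf : (∅ : Set ℕ).DefinableFun LA f) :
    (∅ : Set ℕ).DefinableFun LA fun v => (f v).unpair.1 := by
  refine definableFun_comp₁ (F := fun n => n.unpair.1) ?_ hf
  have : (∅ : Set ℕ).Definable LA
      {w : Option (Fin 1) → ℕ | ∃ b, Nat.pair (w none) b = w (some 0)} :=
    Definable.exists_var (DefinableFun.ofPred_eq (by fun_prop) (by fun_prop))
  unfold DefinableFun
  convert this using 1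
  ext w
  simp only [Function.tupleGraph, mem_ofPred_eq, Function.comp_apply]
  constructor
  · intro h
    exact ⟨(w (some 0)).unpair.2, by rw [← h, Nat.pair_unpair]⟩
  · rintro ⟨b, hb⟩
    simp [← hb]

@[fun_prop]
theorem definableFun_unpair_snd (hf : (∅ : Set ℕ).DefinableFun LA f) :
    (∅ : Set ℕ).DefinableFun LA fun v => (f v).unpair.2 := by
  refine definableFun_comp₁ (F := fun n => n.unpair.2) ?_ hf
  have : (∅ : Set ℕ).Definable LA
      {w : Option (Fin 1) → ℕ | ∃ a, Nat.pair a (w none) = w (some 0)} :=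
    Definable.exists_var (DefinableFun.ofPred_eq (by fun_prop) (by fun_prop))
  unfold DefinableFun
  convert this using 1
  ext w
  simp only [Function.tupleGraph, mem_ofPred_eq, Function.comp_apply]
  constructor
  · intro h
    exact ⟨(w (some 0)).unpair.1, by rw [← h, Nat.pair_unpair]⟩
  · rintro ⟨a, ha⟩
    simp [← ha]

@[fun_prop]
theorem definableFun_mod (hf : (∅ : Set ℕ).DefinableFun LA f)
    (hg : (∅ : Set ℕ).DefinableFun LA g) : (∅ : Set ℕ).DefinableFun LA fun v => f v % g v := by
  refine definableFun_comp₂ (F := (· % ·)) ?_ hf hg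
  have : (∅ : Set ℕ).Definable LA {w : Option (Fin 2) → ℕ | ∃ q,
      w none + w (some 1) * q = w (some 0) ∧ (w none < w (some 1) ∨ w (some 1) = 0)} :=
    Definable.exists_var ((DefinableFun.ofPred_eq (by fun_prop) (by fun_prop)).inter
      ((definable_lt (by fun_prop) (by fun_prop)).union
        (DefinableFun.ofPred_eq (by fun_prop) (by fun_prop))))
  unfold DefinableFun
  convert this using 1
  ext w
  simp only [Function.tupleGraph, mem_ofPred_eq, Function.comp_apply]
  constructor
  · intro h
    rw [← h]
    refine ⟨w (some 0) / w (some 1), Nat.mod_add_div _ _, ?_⟩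
    rcases Nat.eq_zero_or_pos (w (some 1)) with h | h
    · exact Or.inr h
    · exact Or.inl (Nat.mod_lt _ h)
  · rintro ⟨q, hq, hlt | h0⟩
    · exact ((Nat.div_mod_unique (by omega)).2 ⟨hq, hlt⟩).2
    · simp [← hq, h0]

@[fun_prop]
theorem definableFun_beta (hf : (∅ : Set ℕ).DefinableFun LA f)
    (hg : (∅ : Set ℕ).DefinableFun LA g) :
    (∅ : Set ℕ).DefinableFun LA fun v => Nat.beta (f v) (g v) := by
  unfold Nat.beta
  fun_prop

theorem definableFun_prec {f g : ℕ → ℕ}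
    (hf : (∅ : Set ℕ).DefinableFun LA fun v : Fin 1 → ℕ => f (v 0))
    (hg : (∅ : Set ℕ).DefinableFun LA fun v : Fin 1 → ℕ => g (v 0)) :
    (∅ : Set ℕ).DefinableFun LA fun v : Fin 1 → ℕ =>
      Nat.unpaired (fun z n => Nat.rec (motive := fun _ => ℕ) (f z)
        (fun y IH => g (Nat.pair z (Nat.pair y IH))) n) (v 0) := by
  have : (∅ : Set ℕ).Definable LA {w : Option (Fin 1) → ℕ | ∃ c,
      Nat.beta c 0 = f (w (some 0)).unpair.1 ∧
      (∀ x, x < (w (some 0)).unpair.2 → Nat.beta c (x + 1) =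
        g (Nat.pair (w (some 0)).unpair.1 (Nat.pair x (Nat.beta c x)))) ∧
      Nat.beta c (w (some 0)).unpair.2 = w none} := by
    refine Definable.exists_var ((DefinableFun.ofPred_eq (by fun_prop)
      (definableFun_comp₁ hf (by fun_prop))).inter (Definable.inter ?_
        (DefinableFun.ofPred_eq (by fun_prop) (by fun_prop))))
    exact Definable.forall_var ((definable_lt (by fun_prop) (by fun_prop)).imp
      (DefinableFun.ofPred_eq (by fun_prop) (definableFun_comp₁ hg (by fun_prop))))
  unfold DefinableFun
  convert this using 1
  ext w
  exact Nat.rec_eq_iff_exists_beta _ _ _ _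

theorem _root_.Nat.Primrec.definableFun {f : ℕ → ℕ} (hf : Nat.Primrec f) :
    (∅ : Set ℕ).DefinableFun LA fun v : Fin 1 → ℕ => f (v 0) := by
  induction hf with
  | zero => fun_prop
  | succ => exact definableFun_add (f := fun v => v 0) (g := fun _ => 1) (by fun_prop) (by fun_prop)
  | left => fun_prop
  | right => fun_prop
  | pair _ _ hf hg => exact definableFun_pair hf hg
  | comp _ _ hf hg => exact definableFun_comp₁ hf hg
  | prec _ _ hf hg => exact definableFun_prec hf hg

end Definability

/-! Symbols are coded as in the `Encodable` instances of Mathlib's list encodings of terms and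
formulas: the variable `i` is `4 * i + 2` and `0, 1, +, ×` are `1, 3, 5, 7`; in a formula of
context `k`, `⊥` is `4 * k + 11`, the term `t` is `2 * pair k ⌜t⌝`, `<` is `1` followed by
`4 * k + 3`, and `→`, `∀` are `3`, `7`. -/

def decodeTerm (k m : ℕ) : LA.Term (Empty ⊕ Fin k) :=
  let t := m.unpair.1
  let a := m.unpair.2
  if t = 0 then (if h : a < k then Term.var (Sum.inr ⟨a, h⟩) else zeroT)
  else if t = 1 then Constants.term ArithFunc.one
  else if t = 2 then addT (decodeTerm k a.unpair.1) (decodeTerm k a.unpair.2)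
  else mulT (decodeTerm k a.unpair.1) (decodeTerm k a.unpair.2)
termination_by m
decreasing_by
  all_goals
    have := Nat.unpair_add_le m
    have := Nat.unpair_left_le m.unpair.2
    have := Nat.unpair_right_le m.unpair.2
    omega

@[simp]
theorem decodeTerm_pair_zero (k a : ℕ) : decodeTerm k (Nat.pair 0 a) =
    if h : a < k then Term.var (Sum.inr ⟨a, h⟩) else zeroT := by
  rw [decodeTerm]; simp

@[simp]
theorem decodeTerm_pair_one (k a : ℕ) :
    decodeTerm k (Nat.pair 1 a) = Constants.term ArithFunc.one := by
  rw [decodeTerm]; simp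

@[simp]
theorem decodeTerm_pair_two (k a : ℕ) : decodeTerm k (Nat.pair 2 a) =
    addT (decodeTerm k a.unpair.1) (decodeTerm k a.unpair.2) := by
  rw [decodeTerm]; simp

@[simp]
theorem decodeTerm_pair_add_three (k t a : ℕ) : decodeTerm k (Nat.pair (t + 3) a) =
    mulT (decodeTerm k a.unpair.1) (decodeTerm k a.unpair.2) := by
  rw [decodeTerm]; simp

theorem decodeTerm_surjective (k : ℕ) : Function.Surjective (decodeTerm k) := by
  intro t
  induction t with
  | var v =>
    rcases v with e | i
    · exact e.elim
    · exact ⟨Nat.pair 0 i, by simp⟩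
  | func f ts ih =>
    cases f with
    | zero =>
      refine ⟨Nat.pair 0 k, ?_⟩
      simp only [decodeTerm_pair_zero, lt_irrefl, dite_false]
      exact congrArg (func _) (Subsingleton.elim _ _)
    | one =>
      refine ⟨Nat.pair 1 0, ?_⟩
      rw [decodeTerm_pair_one]
      exact congrArg (func _) (Subsingleton.elim _ _)
    | add =>
      obtain ⟨m₀, h₀⟩ := ih 0
      obtain ⟨m₁, h₁⟩ := ih 1
      refine ⟨Nat.pair 2 (Nat.pair m₀ m₁), ?_⟩
      simp only [decodeTerm_pair_two, Nat.unpair_pair, h₀, h₁]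
      exact congrArg (func _) (FinVec.etaExpand_eq ts)
    | mul =>
      obtain ⟨m₀, h₀⟩ := ih 0
      obtain ⟨m₁, h₁⟩ := ih 1
      refine ⟨Nat.pair (0 + 3) (Nat.pair m₀ m₁), ?_⟩
      simp only [decodeTerm_pair_add_three, Nat.unpair_pair, h₀, h₁]
      exact congrArg (func _) (FinVec.etaExpand_eq ts)

def termCode (k m : ℕ) : List ℕ := (decodeTerm k m).listEncode.map encode

def termCodeStep (k : ℕ) (prev : List (List ℕ)) : List ℕ :=
  let t := prev.length.unpair.1
  let a := prev.length.unpair.2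
  let args := prev.getD a.unpair.1 [] ++ prev.getD a.unpair.2 []
  if t = 0 then [if a < k then 4 * a + 2 else 1]
  else if t = 1 then [3]
  else if t = 2 then 5 :: args
  else 7 :: args

theorem termCodeStep_spec (k m : ℕ) :
    termCodeStep k ((List.range m).map (termCode k)) = termCode k m := by
  obtain ⟨t, a, rfl⟩ : ∃ t a, m = Nat.pair t a := ⟨_, _, (Nat.pair_unpair m).symm⟩
  have h₁ (ht : t ≠ 0) : a.unpair.1 < Nat.pair t a :=
    (Nat.unpair_left_le a).trans_lt (Nat.right_lt_pair a ht)
  have h₂ (ht : t ≠ 0) : a.unpair.2 < Nat.pair t a :=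
    (Nat.unpair_right_le a).trans_lt (Nat.right_lt_pair a ht)
  simp only [termCodeStep, List.length_map, List.length_range, Nat.unpair_pair]
  match t with
  | 0 =>
    by_cases h : a < k
    · simp only [termCode, decodeTerm_pair_zero, h, if_true, dite_true]
      show [4 * a + 2] = [2 * (2 * a + 1)]
      ring_nf
    · simp only [termCode, decodeTerm_pair_zero, h, if_false, dite_false]
      rfl
  | 1 =>
    simp only [termCode, decodeTerm_pair_one]
    rfl
  | 2 =>
    rw [List.getD_map_range _ _ (h₁ two_ne_zero), List.getD_map_range _ _ (h₂ two_ne_zero)]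
    simp [termCode, addT, Functions.apply₂, Term.listEncode, List.finRange_succ]
    rfl
  | t + 3 =>
    rw [List.getD_map_range _ _ (h₁ (by omega)), List.getD_map_range _ _ (h₂ (by omega))]
    simp [termCode, mulT, Functions.apply₂, Term.listEncode, List.finRange_succ]
    rfl

theorem primrec_termCodeStep : Primrec₂ termCodeStep := by
  have hn : Primrec fun q : ℕ × List (List ℕ) => q.2.length.unpair :=
    Primrec.unpair.comp (Primrec.list_length.comp Primrec.snd)
  have ht := Primrec.fst.comp hn
  have ha := Primrec.snd.comp hn
  have hargs : Primrec fun q : ℕ × List (List ℕ) =>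
      q.2.getD q.2.length.unpair.2.unpair.1 [] ++ q.2.getD q.2.length.unpair.2.unpair.2 [] :=
    Primrec.list_append.comp
      ((Primrec.list_getD []).comp Primrec.snd (Primrec.fst.comp (Primrec.unpair.comp ha)))
      ((Primrec.list_getD []).comp Primrec.snd (Primrec.snd.comp (Primrec.unpair.comp ha)))
  have hvar : Primrec fun q : ℕ × List (List ℕ) =>
      [if q.2.length.unpair.2 < q.1 then 4 * q.2.length.unpair.2 + 2 else 1] :=
    Primrec.list_cons.comp (Primrec.ite (Primrec.nat_lt.comp ha Primrec.fst)
      (Primrec.nat_add.comp (Primrec.nat_mul.comp (Primrec.const 4) ha) (Primrec.const 2))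
      (Primrec.const 1)) (Primrec.const [])
  exact Primrec.ite (Primrec.eq.comp ht (Primrec.const 0)) hvar
    (Primrec.ite (Primrec.eq.comp ht (Primrec.const 1)) (Primrec.const [3])
      (Primrec.ite (Primrec.eq.comp ht (Primrec.const 2))
        (Primrec.list_cons.comp (Primrec.const 5) hargs)
        (Primrec.list_cons.comp (Primrec.const 7) hargs)))

theorem primrec_termCode : Primrec₂ termCode :=
  Primrec.nat_strong_rec _ (g := fun k prev => some (termCodeStep k prev))
    (Primrec.option_some.comp primrec_termCodeStep) fun k m => congrArg some (termCodeStep_spec k m)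

/-- Decoding into `Σ k, _` lets `∀` raise the context without a context parameter in the
recursion; ill-formed codes decode to `default` through `sigmaImp` and `sigmaAll`. -/
def decodeFormula (n : ℕ) : Σ k, LA.BoundedFormula Empty k :=
  let t := n.unpair.1
  let a := n.unpair.2
  let k := a.unpair.1
  if t = 0 then ⟨a, ⊥⟩
  else if t = 1 then
    ⟨k, (decodeTerm k a.unpair.2.unpair.1).bdEqual (decodeTerm k a.unpair.2.unpair.2)⟩
  else if t = 2 then ⟨k, ltF (decodeTerm k a.unpair.2.unpair.1) (decodeTerm k a.unpair.2.unpair.2)⟩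
  else if t = 3 then BoundedFormula.sigmaImp (decodeFormula a.unpair.1) (decodeFormula a.unpair.2)
  else BoundedFormula.sigmaAll (decodeFormula a)
termination_by n
decreasing_by
  all_goals
    have := Nat.unpair_add_le n
    have := Nat.unpair_left_le n.unpair.2
    have := Nat.unpair_right_le n.unpair.2
    omega

theorem decodeFormula_pair_zero (a : ℕ) : decodeFormula (Nat.pair 0 a) = ⟨a, ⊥⟩ := by
  rw [decodeFormula, Nat.unpair_pair]; rfl

theorem decodeFormula_pair_one (k m₁ m₂ : ℕ) :
    decodeFormula (Nat.pair 1 (Nat.pair k (Nat.pair m₁ m₂))) =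
      ⟨k, (decodeTerm k m₁).bdEqual (decodeTerm k m₂)⟩ := by
  rw [decodeFormula, Nat.unpair_pair, Nat.unpair_pair, Nat.unpair_pair]; rfl

theorem decodeFormula_pair_two (k m₁ m₂ : ℕ) :
    decodeFormula (Nat.pair 2 (Nat.pair k (Nat.pair m₁ m₂))) =
      ⟨k, ltF (decodeTerm k m₁) (decodeTerm k m₂)⟩ := by
  rw [decodeFormula, Nat.unpair_pair, Nat.unpair_pair, Nat.unpair_pair]; rfl

theorem decodeFormula_pair_three (n₁ n₂ : ℕ) :
    decodeFormula (Nat.pair 3 (Nat.pair n₁ n₂)) =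
      BoundedFormula.sigmaImp (decodeFormula n₁) (decodeFormula n₂) := by
  rw [decodeFormula]; simp

theorem decodeFormula_pair_add_four (t a : ℕ) :
    decodeFormula (Nat.pair (t + 4) a) = BoundedFormula.sigmaAll (decodeFormula a) := by
  rw [decodeFormula]; simp

theorem decodeFormula_surjective {k : ℕ} (φ : LA.BoundedFormula Empty k) :
    ∃ n, decodeFormula n = ⟨k, φ⟩ := by
  induction φ with
  | falsum => exact ⟨_, decodeFormula_pair_zero _⟩
  | equal t₁ t₂ =>
    obtain ⟨m₁, rfl⟩ := decodeTerm_surjective _ t₁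
    obtain ⟨m₂, rfl⟩ := decodeTerm_surjective _ t₂
    exact ⟨_, decodeFormula_pair_one _ m₁ m₂⟩
  | @rel k _ R ts =>
    cases R
    obtain ⟨m₁, h₁⟩ := decodeTerm_surjective _ (ts 0)
    obtain ⟨m₂, h₂⟩ := decodeTerm_surjective _ (ts 1)
    refine ⟨_, (decodeFormula_pair_two k m₁ m₂).trans ?_⟩
    rw [h₁, h₂]
    exact congrArg (fun ts => (⟨k, .rel ArithRel.lt ts⟩ : Σ k, LA.BoundedFormula Empty k))
      (FinVec.etaExpand_eq ts)
  | imp φ₁ φ₂ ih₁ ih₂ =>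
    obtain ⟨n₁, h₁⟩ := ih₁
    obtain ⟨n₂, h₂⟩ := ih₂
    exact ⟨_, by rw [decodeFormula_pair_three n₁ n₂, h₁, h₂, BoundedFormula.sigmaImp_apply]⟩
  | all φ ih =>
    obtain ⟨n, h⟩ := ih
    exact ⟨_, by rw [decodeFormula_pair_add_four 0 n, h, BoundedFormula.sigmaAll_apply]⟩

def symbolCode (φ : Σ k, LA.BoundedFormula Empty k) : ℕ × List ℕ :=
  (φ.1, φ.2.listEncode.map encode)

def impCode (c d : ℕ × List ℕ) : ℕ × List ℕ :=
  if c.1 = d.1 then (c.1, 3 :: (c.2 ++ d.2)) else (0, [11])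

def allCode (c : ℕ × List ℕ) : ℕ × List ℕ :=
  if c.1 = 0 then (0, [11]) else (c.1 - 1, 7 :: c.2)

theorem symbolCode_sigmaImp (φ ψ : Σ k, LA.BoundedFormula Empty k) :
    symbolCode (BoundedFormula.sigmaImp φ ψ) = impCode (symbolCode φ) (symbolCode ψ) := by
  obtain ⟨k, φ⟩ := φ
  obtain ⟨l, ψ⟩ := ψ
  by_cases h : k = l
  · subst h
    rw [BoundedFormula.sigmaImp_apply]
    simp [symbolCode, impCode, BoundedFormula.listEncode]
  · rw [show BoundedFormula.sigmaImp ⟨k, φ⟩ ⟨l, ψ⟩ = default from dif_neg h, impCode,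
      if_neg (show ¬(symbolCode ⟨k, φ⟩).1 = (symbolCode ⟨l, ψ⟩).1 from h)]
    rfl

theorem symbolCode_sigmaAll (φ : Σ k, LA.BoundedFormula Empty k) :
    symbolCode (BoundedFormula.sigmaAll φ) = allCode (symbolCode φ) := by
  obtain ⟨_ | k, φ⟩ := φ
  · rfl
  · simp [symbolCode, allCode, BoundedFormula.listEncode]

def termSymbolCode (k m : ℕ) : ℕ := 2 * Nat.pair k (encode (termCode k m))

def formulaCodeStep (prev : List (ℕ × List ℕ)) : ℕ × List ℕ :=
  let t := prev.length.unpair.1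
  let a := prev.length.unpair.2
  let k := a.unpair.1
  let s₁ := termSymbolCode k a.unpair.2.unpair.1
  let s₂ := termSymbolCode k a.unpair.2.unpair.2
  if t = 0 then (a, [4 * a + 11])
  else if t = 1 then (k, [s₁, s₂])
  else if t = 2 then (k, [1, 4 * k + 3, s₁, s₂])
  else if t = 3 then impCode (prev.getD a.unpair.1 (0, [])) (prev.getD a.unpair.2 (0, []))
  else allCode (prev.getD a (0, []))

theorem formulaCodeStep_spec (n : ℕ) :
    formulaCodeStep ((List.range n).map fun i => symbolCode (decodeFormula i)) =
      symbolCode (decodeFormula n) := by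
  obtain ⟨t, a, rfl⟩ : ∃ t a, n = Nat.pair t a := ⟨_, _, (Nat.pair_unpair n).symm⟩
  have ha (ht : t ≠ 0) : a < Nat.pair t a := Nat.right_lt_pair a ht
  match t with
  | 0 =>
    simp only [formulaCodeStep, List.length_map, List.length_range, Nat.unpair_pair,
      decodeFormula_pair_zero, if_true]
    show (a, [4 * a + 11]) = (a, [2 * (2 * (a + 2) + 1) + 1])
    ring_nf
  | 1 =>
    obtain ⟨k, m₁, m₂, rfl⟩ : ∃ k m₁ m₂, a = Nat.pair k (Nat.pair m₁ m₂) :=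
      ⟨_, _, _, by rw [Nat.pair_unpair, Nat.pair_unpair]⟩
    simp only [formulaCodeStep, List.length_map, List.length_range, Nat.unpair_pair,
      decodeFormula_pair_one, one_ne_zero, if_false, if_true]
    simp only [symbolCode, termSymbolCode, termCode, encode_list_map_encode]
    rfl
  | 2 =>
    obtain ⟨k, m₁, m₂, rfl⟩ : ∃ k m₁ m₂, a = Nat.pair k (Nat.pair m₁ m₂) :=
      ⟨_, _, _, by rw [Nat.pair_unpair, Nat.pair_unpair]⟩
    simp only [formulaCodeStep, List.length_map, List.length_range, Nat.unpair_pair,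
      decodeFormula_pair_two, two_ne_zero, OfNat.ofNat_ne_one, if_false, if_true]
    simp [symbolCode, termSymbolCode, termCode, encode_list_map_encode, ltF,
      Relations.boundedFormula₂, Relations.boundedFormula, BoundedFormula.listEncode,
      List.finRange_succ]
    exact ⟨rfl, by ring, rfl, rfl⟩
  | 3 =>
    obtain ⟨n₁, n₂, rfl⟩ : ∃ n₁ n₂, a = Nat.pair n₁ n₂ := ⟨_, _, (Nat.pair_unpair a).symm⟩
    have h₁ := (Nat.left_le_pair n₁ n₂).trans_lt (ha three_ne_zero)
    have h₂ := (Nat.right_le_pair n₁ n₂).trans_lt (ha three_ne_zero)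
    simp only [formulaCodeStep, List.length_map, List.length_range, Nat.unpair_pair]
    rw [List.getD_map_range _ _ h₁, List.getD_map_range _ _ h₂, decodeFormula_pair_three,
      symbolCode_sigmaImp]
    rfl
  | t + 4 =>
    simp only [formulaCodeStep, List.length_map, List.length_range, Nat.unpair_pair]
    rw [List.getD_map_range _ _ (ha (by omega)), decodeFormula_pair_add_four, symbolCode_sigmaAll]
    rfl

theorem primrec_impCode : Primrec₂ impCode :=
  Primrec.ite (Primrec.eq.comp (Primrec.fst.comp Primrec.fst) (Primrec.fst.comp Primrec.snd))
    (Primrec.pair (Primrec.fst.comp Primrec.fst) (Primrec.list_cons.comp (Primrec.const 3)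
      (Primrec.list_append.comp (Primrec.snd.comp Primrec.fst) (Primrec.snd.comp Primrec.snd))))
    (Primrec.const _)

theorem primrec_allCode : Primrec allCode :=
  Primrec.ite (Primrec.eq.comp Primrec.fst (Primrec.const 0)) (Primrec.const _)
    (Primrec.pair (Primrec.pred.comp Primrec.fst)
      (Primrec.list_cons.comp (Primrec.const 7) Primrec.snd))

theorem primrec_termSymbolCode : Primrec₂ termSymbolCode :=
  Primrec.nat_mul.comp (Primrec.const 2) (Primrec₂.natPair.comp Primrec.fst
    (Primrec.encode.comp primrec_termCode))

theorem primrec_formulaCodeStep : Primrec formulaCodeStep := by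
  have hn : Primrec fun prev : List (ℕ × List ℕ) => prev.length.unpair :=
    Primrec.unpair.comp Primrec.list_length
  have ht := Primrec.fst.comp hn
  have ha := Primrec.snd.comp hn
  have ha₁ := Primrec.fst.comp (Primrec.unpair.comp ha)
  have ha₂ := Primrec.snd.comp (Primrec.unpair.comp ha)
  have hs₁ := primrec_termSymbolCode.comp ha₁ (Primrec.fst.comp (Primrec.unpair.comp ha₂))
  have hs₂ := primrec_termSymbolCode.comp ha₁ (Primrec.snd.comp (Primrec.unpair.comp ha₂))
  have hget {f : List (ℕ × List ℕ) → ℕ} (hf : Primrec f) :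
      Primrec fun prev : List (ℕ × List ℕ) => prev.getD (f prev) (0, []) :=
    (Primrec.list_getD (0, [])).comp Primrec.id hf
  refine Primrec.ite (Primrec.eq.comp ht (Primrec.const 0))
    (Primrec.pair ha (Primrec.list_cons.comp (Primrec.nat_add.comp
      (Primrec.nat_mul.comp (Primrec.const 4) ha) (Primrec.const 11)) (Primrec.const []))) ?_
  refine Primrec.ite (Primrec.eq.comp ht (Primrec.const 1))
    (Primrec.pair ha₁ (Primrec.list_cons.comp hs₁
      (Primrec.list_cons.comp hs₂ (Primrec.const [])))) ?_
  refine Primrec.ite (Primrec.eq.comp ht (Primrec.const 2))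
    (Primrec.pair ha₁ (Primrec.list_cons.comp (Primrec.const 1) (Primrec.list_cons.comp
      (Primrec.nat_add.comp (Primrec.nat_mul.comp (Primrec.const 4) ha₁) (Primrec.const 3))
      (Primrec.list_cons.comp hs₁ (Primrec.list_cons.comp hs₂ (Primrec.const [])))))) ?_
  exact Primrec.ite (Primrec.eq.comp ht (Primrec.const 3))
    (primrec_impCode.comp (hget ha₁) (hget ha₂)) (primrec_allCode.comp (hget ha))

theorem primrec_symbolCode_decodeFormula : Primrec fun n => symbolCode (decodeFormula n) :=
  (Primrec.nat_strong_rec (fun (_ : Unit) n => symbolCode (decodeFormula n))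
    (g := fun _ prev => some (formulaCodeStep prev))
    (Primrec.option_some.comp (primrec_formulaCodeStep.comp Primrec.snd))
    fun _ n => congrArg some (formulaCodeStep_spec n)).comp (Primrec.const ()) Primrec.id

def formulaCode (n : ℕ) : ℕ :=
  Nat.pair (decodeFormula n).1 (encode (decodeFormula n).2.listEncode)

theorem primrec_formulaCode : Primrec formulaCode :=
  (Primrec₂.natPair.comp (Primrec.fst.comp primrec_symbolCode_decodeFormula)
    (Primrec.encode.comp (Primrec.snd.comp primrec_symbolCode_decodeFormula))).of_eq
    fun n => by simp [formulaCode, symbolCode, encode_list_map_encode]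

theorem exists_godelCode_iff (c : ℕ) :
    (∃ η : LA.Sentence, godelCode η = c) ↔ ∃ n, formulaCode n = Nat.pair 0 c := by
  constructor
  · rintro ⟨η, rfl⟩
    obtain ⟨n, hn⟩ := decodeFormula_surjective η
    exact ⟨n, by rw [formulaCode, hn]; rfl⟩
  · rintro ⟨n, hn⟩
    obtain ⟨⟨k, φ⟩, hφ⟩ : ∃ φ, decodeFormula n = φ := ⟨_, rfl⟩
    rw [formulaCode, hφ, Nat.pair_eq_pair] at hn
    obtain ⟨rfl, hc⟩ := hn
    exact ⟨φ, hc⟩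

theorem definable_range_godelCode :
    (∅ : Set ℕ).Definable LA {v : Fin 1 → ℕ | ∃ η : LA.Sentence, godelCode η = v 0} := by
  have hcode := (Primrec.nat_iff.1 primrec_formulaCode).definableFun
  simpa only [exists_godelCode_iff] using Definable.exists_var
    (DefinableFun.ofPred_eq (definableFun_comp₁ hcode (by fun_prop)) (by fun_prop))

end LA

theorem exists_truth_definition_of_forall_not_iff (Ψ : LA.Formula (Fin 1))
    (hΨ : ∀ θ : LA.Sentence, ¬(RealizeAtCode Ψ θ ↔ ℕ ⊨ θ)) :
    ∃ Γ : LA.Formula (Fin 1), ∀ n : ℕ,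
      ((∃ η : LA.Sentence, godelCode η = n ∧ ℕ ⊨ η) ↔ Γ.Realize (M := ℕ) (fun _ => n)) := by
  obtain ⟨C, hC⟩ := (empty_definable_iff (M := ℕ)).1 LA.definable_range_godelCode
  refine ⟨C ⊓ ∼Ψ, fun n => ?_⟩
  have hCn : C.Realize (fun _ => n) ↔ ∃ η : LA.Sentence, godelCode η = n :=
    (Set.ext_iff.1 hC fun _ => n).symm
  rw [Formula.realize_inf, Formula.realize_not, hCn]
  constructor
  · rintro ⟨η, rfl, hη⟩
    exact ⟨⟨η, rfl⟩, (not_iff.1 (hΨ η)).2 hη⟩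
  · rintro ⟨⟨η, rfl⟩, hη⟩
    exact ⟨η, rfl, (not_iff.1 (hΨ η)).1 hη⟩

/-- Tarski's Undefinability Theorem implies the Semantic Diagonal Lemma. -/
theorem stmt3
    (tarski : ¬ ∃ Γ : LA.Formula (Fin 1), ∀ n : ℕ,
      ((∃ η : LA.Sentence, godelCode η = n ∧ ℕ ⊨ η) ↔ Γ.Realize (M := ℕ) (fun _ => n))) :
    ∀ Ψ : LA.Formula (Fin 1), ∃ θ : LA.Sentence, (RealizeAtCode Ψ θ ↔ ℕ ⊨ θ) := by
  intro Ψ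
  by_contra h
  exact tarski (exists_truth_definition_of_forall_not_iff Ψ (not_exists.1 h))
end

section
/- If T is a definable and sound theory of arithmetic (there is a formula Pr_T(x) such that T ⊢ η iff ℕ ⊨ Pr_T(⌜η⌝), and every T-theorem is true in ℕ), and the Semantic Diagonal Lemma holds, then there exists a sentence γ true in ℕ such that T ⊬ γ and T ⊬ ¬γ. -/
open FirstOrder Language

/-! The diagonal lemma applied to `¬Pr_T` yields a sentence `θ` saying "I am not provable".
Were `θ` provable it would be true by soundness, i.e. unprovable; so it is unprovable, hence
true, and `¬θ`, being false, is unprovable by soundness as well. -/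

@[simp]
theorem realizeAtCode_not (Ψ : LA.Formula (Fin 1)) (θ : LA.Sentence) :
    RealizeAtCode (∼Ψ) θ ↔ ¬ RealizeAtCode Ψ θ :=
  Formula.realize_not

theorem not_models_not_of_realize {L : Language} {M : Type*} [L.Structure M] {T : L.Theory}
    (hsound : ∀ η : L.Sentence, (T ⊨ᵇ η) → M ⊨ η) {γ : L.Sentence} (hγ : M ⊨ γ) :
    ¬ (T ⊨ᵇ ∼γ) := fun h =>
  (Sentence.realize_not M).mp (hsound _ h) hγ

theorem realize_and_not_models_of_isFixedPoint_not {T : LA.Theory} {PrT : LA.Formula (Fin 1)}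
    {θ : LA.Sentence} (hdef : (T ⊨ᵇ θ) ↔ RealizeAtCode PrT θ) (hsound : (T ⊨ᵇ θ) → ℕ ⊨ θ)
    (hθ : RealizeAtCode (∼PrT) θ ↔ ℕ ⊨ θ) :
    (ℕ ⊨ θ) ∧ ¬ (T ⊨ᵇ θ) := by
  rw [realizeAtCode_not, ← hdef] at hθ
  have hunprovable : ¬ (T ⊨ᵇ θ) := fun h => hθ.mpr (hsound h) h
  exact ⟨hθ.mp hunprovable, hunprovable⟩

/-- **Gödel's Incompleteness Theorem for sound definable theories.**
If `T` is definable (via a formula `Pr_T`) and sound, and the Semantic Diagonal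
Lemma holds, then some true sentence `γ` is independent from `T`. -/
theorem stmt5 (T : LA.Theory) (PrT : LA.Formula (Fin 1))
    (hdef : ∀ η : LA.Sentence, (T ⊨ᵇ η) ↔ RealizeAtCode PrT η)
    (hsound : ∀ η : LA.Sentence, (T ⊨ᵇ η) → ℕ ⊨ η)
    (sdl : ∀ Ψ : LA.Formula (Fin 1), ∃ θ : LA.Sentence, (RealizeAtCode Ψ θ ↔ ℕ ⊨ θ)) :
    ∃ γ : LA.Sentence, (ℕ ⊨ γ) ∧ ¬ (T ⊨ᵇ γ) ∧ ¬ (T ⊨ᵇ ∼γ) := by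
  obtain ⟨θ, hθ⟩ := sdl (∼PrT)
  obtain ⟨htrue, hunprovable⟩ :=
    realize_and_not_models_of_isFixedPoint_not (hdef θ) (hsound θ) hθ
  exact ⟨θ, htrue, hunprovable, not_models_not_of_realize hsound htrue⟩
end

section
/- The Weak Diagonal Lemma for a consistent theory T implies Syntactic Tarski's Theorem for T: if for every formula Ψ(x) there is a sentence θ such that T + (Ψ(⌜θ⌝) ↔ θ) is consistent, then for no formula Ψ(x) does T contain all biconditionals Ψ(⌜β⌝) ↔ β for sentences β. -/
open FirstOrder Language

theorem FirstOrder.Language.Theory.models_bot_union_not_iff_of_models_iff {L : Language}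
    {T : L.Theory} {φ θ : L.Sentence} (h : T ⊨ᵇ φ ⇔ θ) : T ∪ {∼φ ⇔ θ} ⊨ᵇ (⊥ : L.Sentence) := by
  refine Theory.models_sentence_iff.mpr fun M => ?_
  have : (M : Type _) ⊨ T := (Theory.model_union_iff.mp M.is_model).1
  have hφθ : (M : Type _) ⊨ φ ⇔ θ := h.realize_sentence M
  have hnotφθ : (M : Type _) ⊨ ∼φ ⇔ θ :=
    (T ∪ {∼φ ⇔ θ}).realize_sentence_of_mem (Set.mem_union_right _ rfl)
  simp only [Sentence.realize_iff, Sentence.realize_not] at hφθ hnotφθ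
  tauto

theorem diagBicond_not (Ψ : LA.Formula (Fin 1)) (θ : LA.Sentence) :
    diagBicond Ψ.not θ = ∼(Ψ.subst fun _ => numeral Empty (godelCode θ)) ⇔ θ :=
  rfl

theorem stmt8_general (T : LA.Theory)
    (wdl : ∀ Ψ : LA.Formula (Fin 1), ∃ θ : LA.Sentence,
      Consistent (T ∪ {diagBicond Ψ θ})) :
    ∀ Ψ : LA.Formula (Fin 1), ¬ ∀ β : LA.Sentence, T ⊨ᵇ diagBicond Ψ β := by
  intro Ψ hTarski
  obtain ⟨θ, hθ⟩ := wdl Ψ.not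
  rw [diagBicond_not] at hθ
  exact hθ (Theory.models_bot_union_not_iff_of_models_iff (hTarski θ))

/-- The Weak Diagonal Lemma for a consistent `T` implies Syntactic Tarski's
Theorem for `T`: for no formula `Ψ` does `T` contain (prove) all truth
biconditionals `Ψ(⌜β⌝) ↔ β`. -/
theorem stmt8 (T : LA.Theory) (hcons : Consistent T)
    (wdl : ∀ Ψ : LA.Formula (Fin 1), ∃ θ : LA.Sentence,
      Consistent (T ∪ {diagBicond Ψ θ})) :
    ∀ Ψ : LA.Formula (Fin 1), ¬ ∀ β : LA.Sentence, T ⊨ᵇ diagBicond Ψ β :=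
  stmt8_general T wdl
end

section
/- In the Berry-paradox proof of Tarski's theorem: if Υ(x) defines truth in ℕ (ℕ ⊨ Υ(⌜β⌝) ↔ β for all sentences β) and B_Υ(x) is the formula expressing 'x is the least number not definable by any formula of length < 6ℓ_Υ', where ℓ_Υ is the length of Berry_Υ^{<x'}(x) and len(B_Υ) < 6ℓ_Υ, then ℕ ⊨ ¬B_Υ(n̄) for every n, yet there exists b ∈ ℕ with ℕ ⊨ B_Υ(b̄); contradiction, so no truth-defining formula Υ exists. -/
open FirstOrder Language

/-- The formula `φ(x)` defines the number `m` in ℕ: `ℕ ⊨ ∀ζ (φ(ζ) ↔ ζ = m̄)`. -/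
def DefinesNum (φ : LA.Formula (Fin 1)) (m : ℕ) : Prop :=
  ∀ ζ : ℕ, φ.Realize (M := ℕ) (fun _ => ζ) ↔ ζ = m

/-! The formula `B_Υ` describes, within its own length bound, the least number that no formula
below that bound defines. Only finitely many formulas, each defining at most one number, lie
below the bound, so such a least number exists; then `B_Υ` defines it, a contradiction. -/

theorem isLeast_compl_iff {α : Type*} [LinearOrder α] {s : Set α} {a : α} :
    IsLeast sᶜ a ↔ a ∉ s ∧ ∀ b < a, b ∈ s := by
  refine ⟨fun h => ⟨h.1, fun b hb => ?_⟩, fun h => ⟨h.1, fun b hb => ?_⟩⟩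
  · by_contra hbs
    exact (h.2 hbs).not_gt hb
  · by_contra hab
    exact hb (h.2 b (not_le.mp hab))

namespace DefinesNum

variable {φ : LA.Formula (Fin 1)}

theorem unique {m n : ℕ} (hm : DefinesNum φ m) (hn : DefinesNum φ n) : m = n :=
  (hn m).mp ((hm m).mpr rfl)

theorem of_realize_iff_isLeast {s : Set ℕ} {b : ℕ} (hb : IsLeast s b)
    (hφ : ∀ m : ℕ, φ.Realize (M := ℕ) (fun _ => m) ↔ IsLeast s m) : DefinesNum φ b :=
  fun ζ => (hφ ζ).trans ⟨fun hζ => hζ.unique hb, fun h => h ▸ hb⟩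

end DefinesNum

theorem finite_setOf_definesNum {F : Set (LA.Formula (Fin 1))} (hF : F.Finite) :
    {m : ℕ | ∃ φ ∈ F, DefinesNum φ m}.Finite := by
  refine (hF.biUnion fun φ _ => ?_).subset fun m ⟨φ, hφF, hφm⟩ => Set.mem_biUnion hφF hφm
  exact Set.Subsingleton.finite fun _ hm _ hn => DefinesNum.unique hm hn

theorem not_realize_iff_least_undefinable (len : LA.Formula (Fin 1) → ℕ)
    (hfin : ∀ n : ℕ, {φ : LA.Formula (Fin 1) | len φ < n}.Finite)
    {N : ℕ} {β : LA.Formula (Fin 1)} (hβ : len β < N) :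
    ¬ ∀ m : ℕ, (β.Realize (M := ℕ) (fun _ => m) ↔
      ((¬ ∃ φ : LA.Formula (Fin 1), len φ < N ∧ DefinesNum φ m) ∧
       (∀ k < m, ∃ φ : LA.Formula (Fin 1), len φ < N ∧ DefinesNum φ k))) := by
  intro hβm
  set S : Set ℕ := {m | ∃ φ, len φ < N ∧ DefinesNum φ m}
  have hS : S.Finite := finite_setOf_definesNum (hfin N)
  have hb : IsLeast Sᶜ (sInf Sᶜ) := isLeast_csInf hS.infinite_compl.nonempty
  have hβb : DefinesNum β (sInf Sᶜ) :=
    DefinesNum.of_realize_iff_isLeast hb fun m => (hβm m).trans (isLeast_compl_iff (s := S)).symm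
  exact hb.1 ⟨β, hβ, hβb⟩

/-- **The Berry-paradox proof of Tarski's theorem.** Suppose `len` is a length
function on formulas with only finitely many formulas below each length, and
for each `Υ` the formula `B_Υ` has length `< 6ℓ_Υ` and — provided `Υ` defines
truth in ℕ — expresses "`x` is the least number not definable by any formula of
length `< 6ℓ_Υ`". Then (since then `ℕ ⊨ ¬B_Υ(n̄)` for every `n`, yet
`ℕ ⊨ B_Υ(b̄)` for some `b`, a contradiction) no truth-defining formula exists. -/
theorem stmt19 (len : LA.Formula (Fin 1) → ℕ)
    (hfin : ∀ n : ℕ, {φ : LA.Formula (Fin 1) | len φ < n}.Finite)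
    (B : LA.Formula (Fin 1) → LA.Formula (Fin 1)) (ℓ : LA.Formula (Fin 1) → ℕ)
    (hlenB : ∀ Υ : LA.Formula (Fin 1), len (B Υ) < 6 * ℓ Υ)
    (hBmeaning : ∀ Υ : LA.Formula (Fin 1),
      (∀ β : LA.Sentence, (RealizeAtCode Υ β ↔ ℕ ⊨ β)) →
      ∀ m : ℕ, ((B Υ).Realize (M := ℕ) (fun _ => m) ↔
        ((¬ ∃ φ : LA.Formula (Fin 1), len φ < 6 * ℓ Υ ∧ DefinesNum φ m) ∧
         (∀ k < m, ∃ φ : LA.Formula (Fin 1), len φ < 6 * ℓ Υ ∧ DefinesNum φ k)))) :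
    ¬ ∃ Υ : LA.Formula (Fin 1), ∀ β : LA.Sentence, (RealizeAtCode Υ β ↔ ℕ ⊨ β) := by
  rintro ⟨Υ, hΥ⟩
  exact not_realize_iff_least_undefinable len hfin (hlenB Υ) (hBmeaning Υ hΥ)
end
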